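/- arXiv:2005.11641 — 4 statements merged into one kernel-verified Lean document; each statement's English description precedes it below -/
import Mathlib

section
/- Consider the binomial family f(y;θ) = C(M,y) θ^y (1−θ)^{M−y}, y ∈ {0,…,M}, θ ∈ (0,1), with known number of trials M ≥ 1. For any integers r ≥ 1 and K ≥ 1, the condition (r+1)K − 1 ≤ M is necessary and sufficient for the family to be strongly identifiable in the r-th order; that is, (r+1)K − 1 ≤ M holds if and only if: for all distinct θ_1,…,θ_K ∈ (0,1) and all real numbers β_{jl} (1 ≤ j ≤ K, 0 ≤ l ≤ r), if max_{y ∈ {0,…,M}} |Σ_{j=1}^K Σ_{l=0}^r β_{jl} ∂^l f(y;θ_j)/∂θ^l| = 0, then β_{jl} = 0 for all j and l. -/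
/-!
For sufficiency, the coefficients `β` define the linear functional
`p ↦ ∑ β j l * p⁽ˡ⁾(θ j)` on real polynomials. It kills every Bernstein polynomial of degree `M`,
hence every polynomial of degree `≤ M`, since `C(M,k) X^k = ∑_y C(y,k) b_{M,y}`. When
`(r+1)K - 1 ≤ M` the polynomial `(X - θ_{j₀})^{l₀} ∏_{j ≠ j₀} (X - θ_j)^{r+1}` has degree `≤ M`,
and its value under the functional is a nonzero multiple of `β j₀ l₀` as soon as the
coefficients of higher order at `θ_{j₀}` vanish; downward induction on `l₀` gives `β = 0`.
For necessity, `(r+1)K > M + 1` vectors in `ℝ^{M+1}` are linearly dependent.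
-/

open scoped BigOperators

noncomputable section

/-- The binomial density `f(y;θ) = C(M,y) θ^y (1−θ)^{M−y}` with `M` trials, viewed as a
(polynomial) function of the success probability `θ`. -/
def binomDensity (M y : ℕ) (θ : ℝ) : ℝ :=
  (M.choose y : ℝ) * θ ^ y * (1 - θ) ^ (M - y)

open Polynomial Finset

namespace Polynomial

variable {R : Type*} [CommRing R]

theorem eval_iterate_derivative_eq_zero_of_pow_dvd {p : R[X]} {a : R} {n m : ℕ}
    (h : (X - C a) ^ n ∣ p) (hm : m < n) : (derivative^[m] p).eval a = 0 :=
  dvd_iff_isRoot.mp <| (dvd_pow_self _ (Nat.sub_ne_zero_of_lt hm)).trans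
    (pow_sub_dvd_iterate_derivative_of_pow_dvd m h)

theorem eval_iterate_derivative_X_sub_C_pow_mul (a : R) (n : ℕ) (q : R[X]) :
    (derivative^[n] ((X - C a) ^ n * q)).eval a = n.factorial * q.eval a := by
  rw [iterate_derivative_mul, eval_finsetSum, sum_eq_single_of_mem 0 (mem_range.mpr n.succ_pos)]
  · simp [iterate_derivative_X_sub_pow_self]
  · intro i hi hi0
    have : n - (n - i) = i := Nat.sub_sub_self (mem_range_succ_iff.mp hi)
    simp [iterate_derivative_X_sub_pow, this, zero_pow hi0]

end Polynomial

theorem Polynomial.iteratedDeriv_eval {𝕜 : Type*} [NontriviallyNormedField 𝕜] (p : 𝕜[X]) (n : ℕ) :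
    iteratedDeriv n (fun x => p.eval x) = fun x => (derivative^[n] p).eval x := by
  induction n generalizing p with
  | zero => simp
  | succ n ih =>
    have hderiv : deriv (fun x => p.eval x) = fun x => (derivative p).eval x := by
      ext; exact p.deriv
    rw [iteratedDeriv_succ', hderiv, ih, Function.iterate_succ_apply]

namespace bernsteinPolynomial

variable {R : Type*} [CommRing R]

theorem sum_choose_smul (n k : ℕ) (hk : k ≤ n) :
    ∑ ν ∈ range (n + 1), ν.choose k • bernsteinPolynomial R n ν = n.choose k • (X : R[X]) ^ k := by
  have hterm : ∀ z, (k + z).choose k • bernsteinPolynomial R n (k + z)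
      = n.choose k • (X ^ k * bernsteinPolynomial R (n - k) z) := by
    intro z
    have hchoose : n.choose (k + z) * (k + z).choose k = n.choose k * (n - k).choose z := by
      simpa using Nat.choose_mul (n := n) (Nat.le_add_right k z)
    have hchoose' := congrArg (Nat.cast : ℕ → R[X]) hchoose
    push_cast at hchoose'
    simp only [bernsteinPolynomial, nsmul_eq_mul, pow_add, Nat.sub_add_eq]
    linear_combination (X ^ k * X ^ z * (1 - X) ^ (n - k - z) : R[X]) * hchoose'
  rw [show n + 1 = k + (n - k + 1) by omega, sum_range_add]
  simp_rw [hterm]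
  rw [← smul_sum, ← mul_sum, bernsteinPolynomial.sum, mul_one, add_eq_right]
  exact sum_eq_zero fun ν hν => by
    rw [Nat.choose_eq_zero_of_lt (mem_range.mp hν), zero_smul]

theorem mem_span_of_natDegree_le {F : Type*} [Field F] [CharZero F] {n : ℕ} {p : F[X]}
    (hp : p.natDegree ≤ n) :
    p ∈ Submodule.span F (Set.range fun ν : Fin (n + 1) => bernsteinPolynomial F n ν) := by
  rw [p.as_sum_range' (n + 1) (Nat.lt_succ_of_le hp)]
  refine Submodule.sum_mem _ fun k hk => ?_
  rw [← smul_X_eq_monomial]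
  refine Submodule.smul_mem _ _ ?_
  have hk : k ≤ n := Nat.lt_succ_iff.mp (mem_range.mp hk)
  have hchoose : (n.choose k : F) ≠ 0 := Nat.cast_ne_zero.mpr (Nat.choose_pos hk).ne'
  rw [← Submodule.smul_mem_iff _ hchoose, Nat.cast_smul_eq_nsmul, ← sum_choose_smul n k hk]
  exact Submodule.sum_mem _ fun ν hν => Submodule.smul_of_tower_mem _ _
    (Submodule.subset_span ⟨⟨ν, mem_range.mp hν⟩, rfl⟩)

end bernsteinPolynomial

section Hermite

variable {F ι : Type*} [Field F] [Fintype ι] {r : ℕ}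

def hermiteFunctional (θ : ι → F) (β : ι → Fin (r + 1) → F) : F[X] →ₗ[F] F :=
  ∑ j, ∑ l : Fin (r + 1), β j l • (leval (θ j)).comp (derivative ^ (l : ℕ))

theorem hermiteFunctional_apply (θ : ι → F) (β : ι → Fin (r + 1) → F) (p : F[X]) :
    hermiteFunctional θ β p = ∑ j, ∑ l : Fin (r + 1), β j l * (derivative^[l] p).eval (θ j) := by
  simp [hermiteFunctional, Module.End.pow_apply]

variable [DecidableEq ι]

def hermiteTestPolynomial (θ : ι → F) (r : ℕ) (j₀ : ι) (l₀ : ℕ) : F[X] :=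
  (X - C (θ j₀)) ^ l₀ * ∏ j ∈ univ.erase j₀, (X - C (θ j)) ^ (r + 1)

theorem natDegree_hermiteTestPolynomial (θ : ι → F) (r : ℕ) (j₀ : ι) (l₀ : ℕ) :
    (hermiteTestPolynomial θ r j₀ l₀).natDegree = l₀ + (r + 1) * (Fintype.card ι - 1) := by
  have hmonic : ∀ (a : F) (m : ℕ), ((X - C a) ^ m).Monic := fun a m => (monic_X_sub_C a).pow m
  rw [hermiteTestPolynomial, (hmonic _ _).natDegree_mul (monic_prod_of_monic _ _ fun j _ =>
    hmonic _ _), natDegree_prod_of_monic _ _ fun j _ => hmonic _ _]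
  simp [card_erase_of_mem, mul_comm]

theorem hermiteFunctional_hermiteTestPolynomial (θ : ι → F) (β : ι → Fin (r + 1) → F) (j₀ : ι)
    (l₀ : Fin (r + 1)) (hβ : ∀ l, l₀ < l → β j₀ l = 0) :
    hermiteFunctional θ β (hermiteTestPolynomial θ r j₀ l₀)
      = β j₀ l₀ * ((l₀ : ℕ).factorial * ∏ j ∈ univ.erase j₀, (θ j₀ - θ j) ^ (r + 1)) := by
  rw [hermiteFunctional_apply, sum_eq_single_of_mem j₀ (mem_univ _), sum_eq_single_of_mem l₀
    (mem_univ _)]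
  · simp [hermiteTestPolynomial, eval_iterate_derivative_X_sub_C_pow_mul, eval_prod]
  · intro l _ hl
    rcases hl.lt_or_gt with hlt | hgt
    · have hdvd : (X - C (θ j₀)) ^ (l₀ : ℕ) ∣ hermiteTestPolynomial θ r j₀ l₀ :=
        dvd_mul_right _ _
      rw [eval_iterate_derivative_eq_zero_of_pow_dvd hdvd hlt, mul_zero]
    · rw [hβ l hgt, zero_mul]
  · intro j _ hj
    have hdvd : (X - C (θ j)) ^ (r + 1) ∣ hermiteTestPolynomial θ r j₀ l₀ :=
      (dvd_prod_of_mem (fun j => (X - C (θ j)) ^ (r + 1)) (mem_erase.mpr ⟨hj, mem_univ j⟩)).trans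
        (dvd_mul_left _ _)
    exact sum_eq_zero fun l _ => by
      rw [eval_iterate_derivative_eq_zero_of_pow_dvd hdvd l.is_lt, mul_zero]

theorem eq_zero_of_hermiteFunctional_eq_zero [CharZero F] {θ : ι → F} (hθ : Function.Injective θ)
    {β : ι → Fin (r + 1) → F} {n : ℕ} (hn : (r + 1) * Fintype.card ι - 1 ≤ n)
    (h : ∀ p : F[X], p.natDegree ≤ n → hermiteFunctional θ β p = 0) : β = 0 := by
  funext j₀ l₀
  induction l₀ using WellFoundedGT.induction with
  | _ l₀ ih =>
    have hdeg : (hermiteTestPolynomial θ r j₀ l₀).natDegree ≤ n := by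
      have hcard : 0 < Fintype.card ι := Fintype.card_pos_iff.mpr ⟨j₀⟩
      have hl₀ := l₀.is_le
      obtain ⟨c, hc⟩ := Nat.exists_eq_succ_of_ne_zero hcard.ne'
      rw [hc, Nat.mul_succ] at hn
      rw [natDegree_hermiteTestPolynomial, hc, Nat.succ_sub_one]
      omega
    have hvalue : (l₀ : ℕ).factorial * ∏ j ∈ univ.erase j₀, (θ j₀ - θ j) ^ (r + 1) ≠ (0 : F) :=
      mul_ne_zero (Nat.cast_ne_zero.mpr (Nat.factorial_ne_zero _)) <| prod_ne_zero_iff.mpr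
        fun j hj => pow_ne_zero _ <| sub_ne_zero.mpr <| hθ.ne (ne_of_mem_erase hj).symm
    have htest := hermiteFunctional_hermiteTestPolynomial θ β j₀ l₀ ih
    rw [h _ hdeg, eq_comm, mul_eq_zero] at htest
    exact htest.resolve_right hvalue

end Hermite

theorem exists_ne_zero_forall_sum_mul_eq_zero {F ι κ : Type*} [Field F] [Fintype ι] [Fintype κ]
    (v : ι → κ → F) (h : Fintype.card κ < Fintype.card ι) :
    ∃ c : ι → F, c ≠ 0 ∧ ∀ k, ∑ i, c i * v i k = 0 := by
  have hdep : ¬LinearIndependent F v := fun hv =>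
    (hv.fintype_card_le_finrank.trans_eq (Module.finrank_fintype_fun_eq_card F)).not_gt h
  obtain ⟨c, hc, i, hi⟩ := Fintype.not_linearIndependent_iff.mp hdep
  exact ⟨c, fun h0 => hi (congrFun h0 i), fun k => by simpa using congrFun hc k⟩

theorem exists_injective_mem_Ioo {α : Type*} [Preorder α] [DenselyOrdered α] {a b : α}
    (hab : a < b) (K : ℕ) : ∃ θ : Fin K → α, (∀ j, θ j ∈ Set.Ioo a b) ∧ Function.Injective θ := by
  have := Set.Ioo.infinite hab
  let e : Fin K ↪ Set.Ioo a b := Fin.valEmbedding.trans (Infinite.natEmbedding _)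
  exact ⟨fun j => e j, fun j => (e j).2, Subtype.val_injective.comp e.injective⟩

theorem iteratedDeriv_binomDensity (M y l : ℕ) (θ : ℝ) :
    iteratedDeriv l (binomDensity M y) θ = (derivative^[l] (bernsteinPolynomial ℝ M y)).eval θ := by
  have hpoly : binomDensity M y = fun x => (bernsteinPolynomial ℝ M y).eval x := by
    ext x
    simp [binomDensity, bernsteinPolynomial, mul_assoc]
  rw [hpoly, Polynomial.iteratedDeriv_eval]

theorem binomial_strong_identifiability_iff_general (M K r : ℕ) :
    (r + 1) * K - 1 ≤ M ↔
      ∀ θ : Fin K → ℝ, (∀ j, θ j ∈ Set.Ioo (0:ℝ) 1) → Function.Injective θ →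
        ∀ β : Fin K → Fin (r + 1) → ℝ,
          (∀ y : ℕ, y ≤ M →
            ∑ j, ∑ l : Fin (r + 1),
              β j l * iteratedDeriv (l : ℕ) (binomDensity M y) (θ j) = 0) →
          ∀ j l, β j l = 0 := by
  constructor
  · intro hle θ _ hθ β hβ
    have hbern : ∀ ν : Fin (M + 1), hermiteFunctional θ β (bernsteinPolynomial ℝ M ν) = 0 :=
      fun ν => by
        simpa [hermiteFunctional_apply, iteratedDeriv_binomDensity] using hβ ν (by omega)
    have hzero := eq_zero_of_hermiteFunctional_eq_zero hθ (by simpa using hle) fun p hp =>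
      LinearMap.mem_ker.mp <| Submodule.span_le.mpr (Set.range_subset_iff.mpr hbern)
        (bernsteinPolynomial.mem_span_of_natDegree_le hp)
    exact fun j l => congrFun₂ hzero j l
  · intro h
    by_contra! hlt
    obtain ⟨θ, hθIoo, hθ⟩ := exists_injective_mem_Ioo (a := (0 : ℝ)) zero_lt_one K
    obtain ⟨c, hc, hcβ⟩ := exists_ne_zero_forall_sum_mul_eq_zero
      (fun (jl : Fin K × Fin (r + 1)) (y : Fin (M + 1)) =>
        iteratedDeriv jl.2 (binomDensity M y) (θ jl.1))
      (by simp only [Fintype.card_prod, Fintype.card_fin]; rw [mul_comm]; omega)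
    refine hc (funext fun jl => h θ hθIoo hθ (fun j l => c (j, l)) (fun y hy => ?_) jl.1 jl.2)
    simpa [Fintype.sum_prod_type] using hcβ ⟨y, by omega⟩

/-- **Proposition 1 of the Group-Sort-Fuse paper.**
For the binomial family with `M ≥ 1` known trials and any integers `r, K ≥ 1`, the condition
`(r+1)K − 1 ≤ M` is necessary and sufficient for strong identifiability in the `r`-th order:
for all distinct `θ_1, …, θ_K ∈ (0,1)` and all reals `β_{jl}` (`1 ≤ j ≤ K`, `0 ≤ l ≤ r`),
if `∑_{j=1}^K ∑_{l=0}^r β_{jl} ∂^l f(y;θ_j)/∂θ^l = 0` for every `y ∈ {0,…,M}`, then all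
`β_{jl} = 0`. -/
theorem binomial_strong_identifiability_iff (M K r : ℕ)
    (hM : 1 ≤ M) (hK : 1 ≤ K) (hr : 1 ≤ r) :
    (r + 1) * K - 1 ≤ M ↔
      ∀ θ : Fin K → ℝ, (∀ j, θ j ∈ Set.Ioo (0:ℝ) 1) → Function.Injective θ →
        ∀ β : Fin K → Fin (r + 1) → ℝ,
          (∀ y : ℕ, y ≤ M →
            ∑ j, ∑ l : Fin (r + 1),
              β j l * iteratedDeriv (l : ℕ) (binomDensity M y) (θ j) = 0) →
          ∀ j l, β j l = 0 :=
  binomial_strong_identifiability_iff_general M K r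

end
end

section
/- Let t_1,…,t_K ∈ ℝ and let α be a permutation of {1,…,K} sorting them in nondecreasing order: t_{α(1)} ≤ t_{α(2)} ≤ … ≤ t_{α(K)}. Then for every cluster partition {C_1,…,C_H} of {t_1,…,t_K}, each set α^{-1}({j : t_j ∈ C_h}), h = 1,…,H, is a set of consecutive integers. In other words, the permutation inducing the natural ordering on the real line satisfies the atom-ordering property of a cluster ordering. -/
theorem mem_fiber_of_le_of_le {ι α β : Type*} [AddCommGroup α] [LinearOrder α]
    [IsOrderedAddMonoid α] {t : ι → α} {B : ι → β} {b : β}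
    (hcluster : ∀ i j l s : ι, B i = b → B j = b → B l = b → B s ≠ b →
      |t i - t j| < |t l - t s|)
    {x y z : ι} (hxy : t x ≤ t y) (hyz : t y ≤ t z) (hx : B x = b) (hz : B z = b) :
    B y = b := by
  by_contra hy
  have hfar : |t x - t z| < |t x - t y| := hcluster x z x y hx hz hx hy
  have hnear : |t y - t x| ≤ |t z - t x| :=
    Set.abs_sub_left_of_mem_uIcc (Set.mem_uIcc_of_le hxy hyz)
  rw [abs_sub_comm (t y), abs_sub_comm (t z)] at hnear
  exact hfar.not_ge hnear

theorem natural_ordering_is_cluster_ordering_general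
    (K H : ℕ) (t : Fin K → ℝ) (α : Equiv.Perm (Fin K))
    (hsort : ∀ i j : Fin K, i ≤ j → t (α i) ≤ t (α j))
    (B : Fin K → Fin H)
    (hcluster : ∀ (h : Fin H) (i j l s : Fin K), B i = h → B j = h → B l = h → B s ≠ h →
      |t i - t j| < |t l - t s|) :
    ∀ (h : Fin H) (i j l : Fin K), i ≤ j → j ≤ l →
      B (α i) = h → B (α l) = h → B (α j) = h :=
  fun h _ _ _ hij hjl hi hl =>
    mem_fiber_of_le_of_le (hcluster h) (hsort _ _ hij) (hsort _ _ hjl) hi hl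

/-- **The natural ordering on the real line is a cluster ordering (atom-ordering
property), as asserted in Section 2 of the Group-Sort-Fuse paper.**
Let `t_1, …, t_K ∈ ℝ` and let `α` be a permutation sorting them in nondecreasing order.
Then for every cluster partition of `{t_1,…,t_K}` (encoded by the fibers of a surjective
block map `B` all of whose within-cluster distances are strictly smaller than all of its
between-cluster distances), each set `α⁻¹({j : t_j ∈ C_h})` is a set of consecutive
integers (i.e. is interval-closed). -/
theorem natural_ordering_is_cluster_ordering
    (K H : ℕ) (t : Fin K → ℝ) (α : Equiv.Perm (Fin K))
    (hsort : ∀ i j : Fin K, i ≤ j → t (α i) ≤ t (α j))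
    (B : Fin K → Fin H) (hBsurj : Function.Surjective B)
    (hcluster : ∀ (h : Fin H) (i j l s : Fin K), B i = h → B j = h → B l = h → B s ≠ h →
      |t i - t j| < |t l - t s|) :
    ∀ (h : Fin H) (i j l : Fin K), i ≤ j → j ≤ l →
      B (α i) = h → B (α l) = h → B (α j) = h :=
  natural_ordering_is_cluster_ordering_general K H t α hsort B hcluster
end

section
/- Let t_1,…,t_K ∈ ℝ^d and let α be any permutation of {1,…,K} satisfying the greedy nearest-neighbor property: for each k = 2,…,K, α(k) minimizes ‖t_j − t_{α(k−1)}‖ over all indices j ∈ {1,…,K} ∖ {α(1),…,α(k−1)}. Then for every cluster partition {C_1,…,C_H} of {t_1,…,t_K}, each set α^{-1}({j : t_j ∈ C_h}), h = 1,…,H, is a set of consecutive integers; that is, any such greedy permutation satisfies the atom-ordering property of a cluster ordering. -/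
/-!
If the labels of a sequence are not consecutive, there is a step `k → k + 1` that leaves a
cluster which is visited again later, at some `l > k + 1`. At step `k` the point `t_{α l}` was
still unvisited, so greediness gives `d(α(k), α(k+1)) ≤ d(α(k), α(l))`; but `α(k)` and `α(l)`
lie in the same cluster and `α(k+1)` does not, so the cluster condition gives the strict
reverse inequality.
-/

theorem Fin.ordConnected_setOf_of_stays_out {m : ℕ} {P : Fin (m + 1) → Prop}
    (hstay : ∀ k : Fin m, P k.castSucc → ¬ P k.succ → ∀ l, k.castSucc < l → ¬ P l) :
    Set.OrdConnected {j | P j} := by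
  refine ⟨fun i hi l hl j hj => ?_⟩
  induction j using Fin.induction with
  | zero => rwa [le_antisymm hj.1 (Fin.zero_le i)] at hi
  | succ k ih =>
    obtain ⟨hij, hjl⟩ := hj
    rcases hij.eq_or_lt with rfl | hlt
    · exact hi
    · have hk : P k.castSucc :=
        ih ⟨Fin.le_castSucc_iff.mpr hlt, k.castSucc_lt_succ.le.trans hjl⟩
      by_contra hnot
      exact hstay k hk hnot l (k.castSucc_lt_succ.trans_le hjl) hl

theorem greedy_ordering_stays_out_of_cluster {X β : Type*} [PseudoMetricSpace X] {m : ℕ}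
    {t : Fin (m + 1) → X} {α : Equiv.Perm (Fin (m + 1))}
    (hgreedy : ∀ k : Fin m, ∀ j : Fin (m + 1),
      (∀ i : Fin (m + 1), i ≤ k.castSucc → α i ≠ j) →
      dist (t (α k.succ)) (t (α k.castSucc)) ≤ dist (t j) (t (α k.castSucc)))
    {B : Fin (m + 1) → β}
    (hcluster : ∀ (h : β) (i j l s : Fin (m + 1)),
      B i = h → B j = h → B l = h → B s ≠ h → dist (t i) (t j) < dist (t l) (t s))
    (h : β) (k : Fin m) (hk : B (α k.castSucc) = h) (hnext : B (α k.succ) ≠ h)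
    (l : Fin (m + 1)) (hkl : k.castSucc < l) : B (α l) ≠ h := by
  intro hl
  have hunvisited : ∀ i, i ≤ k.castSucc → α i ≠ α l := fun i hi heq =>
    (hi.trans_lt hkl).ne (α.injective heq)
  have hstep := hgreedy k (α l) hunvisited
  have hgap := hcluster h _ _ _ _ hl hk hk hnext
  rw [dist_comm (t (α k.succ))] at hstep
  exact hstep.not_gt hgap

theorem greedy_ordering_is_cluster_ordering_general
    (d m H : ℕ) (t : Fin (m + 1) → EuclideanSpace ℝ (Fin d))
    (α : Equiv.Perm (Fin (m + 1)))
    (hgreedy : ∀ k : Fin m, ∀ j : Fin (m + 1),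
      (∀ i : Fin (m + 1), i ≤ k.castSucc → α i ≠ j) →
      dist (t (α k.succ)) (t (α k.castSucc)) ≤ dist (t j) (t (α k.castSucc)))
    (B : Fin (m + 1) → Fin H)
    (hcluster : ∀ (h : Fin H) (i j l s : Fin (m + 1)),
      B i = h → B j = h → B l = h → B s ≠ h →
      dist (t i) (t j) < dist (t l) (t s)) :
    ∀ (h : Fin H) (i j l : Fin (m + 1)), i ≤ j → j ≤ l →
      B (α i) = h → B (α l) = h → B (α j) = h := by
  intro h i j l hij hjl hi hl
  have hconn : Set.OrdConnected {j | B (α j) = h} :=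
    Fin.ordConnected_setOf_of_stays_out
      (greedy_ordering_stays_out_of_cluster hgreedy hcluster h)
  exact hconn.out hi hl ⟨hij, hjl⟩

/-- **The greedy nearest-neighbour ordering satisfies the atom-ordering property of a
cluster ordering (equation (7) of the Group-Sort-Fuse paper).**
Let `t_1, …, t_K ∈ ℝ^d` (`K = m + 1`) and let `α` be any permutation with the greedy
property: for each `k ≥ 2`, `α(k)` minimizes the distance to `t_{α(k−1)}` among all
indices not yet visited.  Then for every cluster partition of `{t_1,…,t_K}` (encoded by
the fibers of a surjective block map `B` whose within-cluster distances are all strictly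
smaller than its between-cluster distances), each set `α⁻¹({j : t_j ∈ C_h})` is a set of
consecutive integers (i.e. is interval-closed). -/
theorem greedy_ordering_is_cluster_ordering
    (d m H : ℕ) (t : Fin (m + 1) → EuclideanSpace ℝ (Fin d))
    (α : Equiv.Perm (Fin (m + 1)))
    (hgreedy : ∀ k : Fin m, ∀ j : Fin (m + 1),
      (∀ i : Fin (m + 1), i ≤ k.castSucc → α i ≠ j) →
      dist (t (α k.succ)) (t (α k.castSucc)) ≤ dist (t j) (t (α k.castSucc)))
    (B : Fin (m + 1) → Fin H) (hBsurj : Function.Surjective B)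
    (hcluster : ∀ (h : Fin H) (i j l s : Fin (m + 1)),
      B i = h → B j = h → B l = h → B s ≠ h →
      dist (t i) (t j) < dist (t l) (t s)) :
    ∀ (h : Fin H) (i j l : Fin (m + 1)), i ≤ j → j ≤ l →
      B (α i) = h → B (α l) = h → B (α j) = h :=
  greedy_ordering_is_cluster_ordering_general d m H t α hgreedy B hcluster
end

section
/- Let p and p_0 be probability densities with respect to a σ-finite measure ν on a measurable space Y, let P_0 be the probability measure with density p_0, and let Q be any probability measure on Y with Q({p_0 = 0}) = 0. Then ¼ ∫_{{p_0 > 0}} log(p/p_0) dQ ≤ ∫_{{p_0 > 0}} ½ log((p + p_0)/(2p_0)) d(Q − P_0) − h²((p + p_0)/2, p_0), where the left-hand integral is interpreted in [−∞, ∞). -/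
/-!
Write `m = (p + p₀) / 2`. On `{p₀ > 0}` the AM-GM inequality `√(p / p₀) ≤ m / p₀` gives
`¼ log (p / p₀) ≤ ½ log (m / p₀)`, so the left side is at most the `Q`-integral of
`½ log (m / p₀)`; where `p = 0` the left side is `-∞` unless `Q` ignores that set.
It remains to bound the `P₀`-integral of `½ log (m / p₀)`, i.e. `-½ KL(p₀, m)`, by `-h²(m, p₀)`:
from `log x ≤ 2 (√x - 1)` one gets `∫ p₀ log (m / p₀) ≤ 2 (∫ √(m p₀) - 1) = -∫ (√m - √p₀)²`,
because `m` and `p₀` both integrate to `1`. Since `m ≥ p₀ / 2`, the integrand `p₀ log (m / p₀)` is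
bounded below by `-p₀ log 2`, which makes it integrable.
-/

open MeasureTheory
open scoped ENNReal

noncomputable section

namespace Real

lemma log_le_two_mul_sqrt_sub_one {x : ℝ} (hx : 0 < x) : log x ≤ 2 * (√x - 1) := by
  have h := log_le_sub_one_of_pos (sqrt_pos.2 hx)
  rw [log_sqrt hx.le] at h
  linarith

lemma mul_log_div_le {m b : ℝ} (hm : 0 < m) (hb : 0 < b) :
    b * log (m / b) ≤ 2 * (√(m * b) - b) := by
  have hsqrt : b * √(m / b) = √(m * b) := by
    rw [sqrt_div hm.le, sqrt_mul hm.le, mul_div_assoc', mul_comm, mul_div_assoc, div_sqrt]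
  nlinarith [mul_le_mul_of_nonneg_left (log_le_two_mul_sqrt_sub_one (div_pos hm hb)) hb.le]

lemma neg_log_two_le_log_div {m b : ℝ} (hb : 0 < b) (hbm : b ≤ 2 * m) :
    -log 2 ≤ log (m / b) := by
  rw [← log_inv]
  exact log_le_log (by norm_num) (by rw [le_div_iff₀ hb]; linarith)

/-- AM-GM, `√(a b) ≤ (a + b) / 2`, in logarithmic form. -/
lemma log_div_le_two_mul_log_add_div {a b : ℝ} (ha : 0 < a) (hb : 0 < b) :
    log (a / b) ≤ 2 * log ((a + b) / (2 * b)) := by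
  have hamgm : √(a / b) ≤ (a + b) / (2 * b) := by
    rw [sqrt_div ha.le, div_le_div_iff₀ (sqrt_pos.2 hb) (by positivity)]
    nlinarith [sq_nonneg (√a - √b), sq_sqrt ha.le, sq_sqrt hb.le, sqrt_nonneg a, sqrt_nonneg b]
  have h := log_le_log (sqrt_pos.2 (div_pos ha hb)) hamgm
  rw [log_sqrt (div_pos ha hb).le] at h
  linarith

lemma sqrt_sub_sqrt_sq {a b : ℝ} (ha : 0 ≤ a) (hb : 0 ≤ b) :
    (√a - √b) ^ 2 = a + b - 2 * √(a * b) := by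
  rw [sqrt_mul ha, sub_sq, sq_sqrt ha, sq_sqrt hb]
  ring

lemma two_mul_sqrt_mul_le_add {a b : ℝ} (ha : 0 ≤ a) (hb : 0 ≤ b) : 2 * √(a * b) ≤ a + b := by
  linarith [sqrt_sub_sqrt_sq ha hb, sq_nonneg (√a - √b)]

end Real

namespace MeasureTheory

variable {α : Type*} [MeasurableSpace α] {μ : Measure α}

section Density

variable {f : α → ℝ} (hf : AEStronglyMeasurable f μ) (hf0 : 0 ≤ᵐ[μ] f)
  (hf1 : ∫⁻ x, ENNReal.ofReal (f x) ∂μ = 1)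
include hf hf0 hf1

lemma integrable_of_lintegral_ofReal_eq_one : Integrable f μ :=
  ⟨hf, by rw [hasFiniteIntegral_iff_ofReal hf0, hf1]; exact ENNReal.one_lt_top⟩

lemma integral_eq_one_of_lintegral_ofReal_eq_one : ∫ x, f x ∂μ = 1 := by
  rw [integral_eq_lintegral_of_nonneg_ae hf0 hf, hf1, ENNReal.toReal_one]

end Density

lemma setIntegral_withDensity_ofReal {b : α → ℝ} (hb : Measurable b) (hb0 : ∀ x, 0 ≤ b x)
    (g : α → ℝ) {s : Set α} (hs : MeasurableSet s) :
    ∫ x in s, g x ∂(μ.withDensity fun x => ENNReal.ofReal (b x)) = ∫ x in s, b x * g x ∂μ := by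
  change ∫ x in s, g x ∂(μ.withDensity fun x => ((b x).toNNReal : ℝ≥0∞)) = _
  rw [setIntegral_withDensity_eq_setIntegral_smul hb.real_toNNReal g hs]
  simp only [NNReal.smul_def, Real.coe_toNNReal _ (hb0 _), smul_eq_mul]

section Hellinger

variable {m b : α → ℝ} (hm : Integrable m μ) (hb : Integrable b μ)
  (hm0 : ∀ x, 0 ≤ m x) (hb0 : ∀ x, 0 ≤ b x)
include hm hb hm0 hb0

lemma integrable_sqrt_mul : Integrable (fun x => √(m x * b x)) μ := by
  refine Integrable.mono' (hm.add hb)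
    (Real.continuous_sqrt.comp_aestronglyMeasurable (hm.1.mul hb.1)) (.of_forall fun x => ?_)
  rw [Real.norm_of_nonneg (Real.sqrt_nonneg _), Pi.add_apply]
  linarith [Real.two_mul_sqrt_mul_le_add (hm0 x) (hb0 x), Real.sqrt_nonneg (m x * b x)]

lemma integral_sqrt_sub_sqrt_sq :
    ∫ x, (√(m x) - √(b x)) ^ 2 ∂μ = ∫ x, m x ∂μ + ∫ x, b x ∂μ - 2 * ∫ x, √(m x * b x) ∂μ := by
  simp only [Real.sqrt_sub_sqrt_sq (hm0 _) (hb0 _)]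
  rw [integral_sub (f := fun x => m x + b x) (hm.add hb)
    ((integrable_sqrt_mul hm hb hm0 hb0).const_mul 2), integral_add hm hb, integral_const_mul]

/-- In the paper's notation, `h²(m, b) ≤ ½ KL(b, m)` for probability densities `m`, `b`. -/
lemma setIntegral_mul_log_div_add_integral_sqrt_sub_sqrt_sq_nonpos (hb_meas : Measurable b)
    (hm1 : ∫ x, m x ∂μ = 1) (hb1 : ∫ x, b x ∂μ = 1) (hpos : ∀ x, 0 < b x → 0 < m x)
    (hint : IntegrableOn (fun x => b x * Real.log (m x / b x)) {x | 0 < b x} μ) :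
    ∫ x in {x | 0 < b x}, b x * Real.log (m x / b x) ∂μ
      + ∫ x, (√(m x) - √(b x)) ^ 2 ∂μ ≤ 0 := by
  have hs : MeasurableSet {x | 0 < b x} := measurableSet_lt measurable_const hb_meas
  have hsqrt := integrable_sqrt_mul hm hb hm0 hb0
  have hvanish : ∫ x in {x | 0 < b x}, 2 * (√(m x * b x) - b x) ∂μ
      = ∫ x, 2 * (√(m x * b x) - b x) ∂μ := by
    refine setIntegral_eq_integral_of_forall_compl_eq_zero fun x hx => ?_
    simp [le_antisymm (not_lt.1 hx) (hb0 x)]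
  have hkl : ∫ x in {x | 0 < b x}, b x * Real.log (m x / b x) ∂μ
      ≤ ∫ x, 2 * (√(m x * b x) - b x) ∂μ :=
    hvanish ▸ setIntegral_mono_on hint ((hsqrt.sub hb).const_mul 2).integrableOn hs
      fun x hx => Real.mul_log_div_le (hpos x hx) hx
  rw [integral_const_mul, integral_sub hsqrt hb] at hkl
  rw [integral_sqrt_sub_sqrt_sq hm hb hm0 hb0]
  linarith

lemma integrableOn_mul_log_div (hm_meas : Measurable m) (hb_meas : Measurable b)
    (hbm : ∀ x, b x ≤ 2 * m x) :
    IntegrableOn (fun x => b x * Real.log (m x / b x)) {x | 0 < b x} μ := by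
  have hs : MeasurableSet {x | 0 < b x} := measurableSet_lt measurable_const hb_meas
  refine Integrable.mono' ((((integrable_sqrt_mul hm hb hm0 hb0).const_mul 2).add
      (hb.const_mul (Real.log 2))).restrict)
    (hb_meas.mul (hm_meas.div hb_meas).log).aestronglyMeasurable
    ((ae_restrict_iff' hs).2 (.of_forall fun x hx => ?_))
  have hlow := mul_le_mul_of_nonneg_left
    (Real.neg_log_two_le_log_div hx (hbm x)) (hb0 x)
  have hup := Real.mul_log_div_le (by linarith [hbm x, hx.out] : 0 < m x) hx
  rw [Real.norm_eq_abs, abs_le, Pi.add_apply]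
  have hlog2 := mul_nonneg (hb0 x) (Real.log_nonneg one_le_two)
  constructor <;> linarith [Real.sqrt_nonneg (m x * b x), hb0 x]

end Hellinger

section EReal

variable {f g : α → ℝ}

lemma Integrable.lintegral_ofReal_ne_top (hf : Integrable f μ) :
    ∫⁻ x, ENNReal.ofReal (f x) ∂μ ≠ ⊤ :=
  ((lintegral_mono fun x => Real.ofReal_le_enorm (f x)).trans_lt hf.2).ne

lemma coe_lintegral_ofReal_sub_lintegral_ofReal_neg (hf : Integrable f μ) :
    ((∫⁻ x, ENNReal.ofReal (f x) ∂μ : ℝ≥0∞) : EReal) - (∫⁻ x, ENNReal.ofReal (-f x) ∂μ : ℝ≥0∞)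
      = ((∫ x, f x ∂μ : ℝ) : EReal) := by
  rw [integral_eq_lintegral_pos_part_sub_lintegral_neg_part hf, EReal.coe_sub,
    EReal.coe_ennreal_toReal hf.lintegral_ofReal_ne_top,
    EReal.coe_ennreal_toReal (Integrable.lintegral_ofReal_ne_top (f := fun x => -f x) hf.neg)]

lemma coe_lintegral_ofReal_sub_lintegral_ofReal_neg_le_integral (hf : Integrable f μ)
    (hgf : g ≤ᵐ[μ] f) :
    ((∫⁻ x, ENNReal.ofReal (g x) ∂μ : ℝ≥0∞) : EReal) - (∫⁻ x, ENNReal.ofReal (-g x) ∂μ : ℝ≥0∞)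
      ≤ ((∫ x, f x ∂μ : ℝ) : EReal) := by
  rw [← coe_lintegral_ofReal_sub_lintegral_ofReal_neg hf]
  refine EReal.sub_le_sub (EReal.coe_ennreal_le_coe_ennreal_iff.2 ?_)
    (EReal.coe_ennreal_le_coe_ennreal_iff.2 ?_) <;>
  refine lintegral_mono_ae (hgf.mono fun x hx => ENNReal.ofReal_le_ofReal ?_) <;> linarith

lemma coe_lintegral_ofReal_sub_lintegral_ite_top_le_integral {P : α → Prop} [DecidablePred P]
    (hP : MeasurableSet {x | P x}) (hf : Integrable f μ) (hgf : ∀ᵐ x ∂μ, ¬ P x → g x ≤ f x) :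
    ((∫⁻ x, ENNReal.ofReal (g x) ∂μ : ℝ≥0∞) : EReal)
        - (∫⁻ x, (if P x then ⊤ else ENNReal.ofReal (-g x)) ∂μ : ℝ≥0∞)
      ≤ ((∫ x, f x ∂μ : ℝ) : EReal) := by
  by_cases hnull : μ {x | P x} = 0
  · have hnotP : ∀ᵐ x ∂μ, ¬ P x := measure_eq_zero_iff_ae_notMem.1 hnull
    rw [lintegral_congr_ae (hnotP.mono fun x hx => if_neg hx)]
    exact coe_lintegral_ofReal_sub_lintegral_ofReal_neg_le_integral hf
      (hnotP.mp (hgf.mono fun x hx hxP => hx hxP))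
  · have htop : ∫⁻ x, {x | P x}.indicator (fun _ => ⊤) x ∂μ
        ≤ ∫⁻ x, (if P x then ⊤ else ENNReal.ofReal (-g x)) ∂μ :=
      lintegral_mono fun x => by by_cases hx : P x <;> simp [hx]
    rw [lintegral_indicator_const hP, ENNReal.top_mul hnull, top_le_iff] at htop
    rw [htop, EReal.coe_ennreal_top, EReal.sub_top]
    exact bot_le

end EReal

end MeasureTheory

theorem basic_inequality_core_general
    {Y : Type*} [MeasurableSpace Y] (ν : Measure Y)
    (p p0 : Y → ℝ)
    (hpmeas : Measurable p) (hp0meas : Measurable p0)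
    (hpnn : ∀ y, 0 ≤ p y) (hp0nn : ∀ y, 0 ≤ p0 y)
    (hpdens : ∫⁻ y, ENNReal.ofReal (p y) ∂ν = 1)
    (hp0dens : ∫⁻ y, ENNReal.ofReal (p0 y) ∂ν = 1)
    (Q : Measure Y)
    (hQint : Integrable (fun y => Real.log ((p y + p0 y) / (2 * p0 y)))
      (Q.restrict {y | 0 < p0 y})) :
    (((4⁻¹ : ℝ) : EReal) *
        ((((∫⁻ y in {y | 0 < p0 y}, ENNReal.ofReal (Real.log (p y / p0 y)) ∂Q) : ℝ≥0∞) :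
            EReal)
          - (((∫⁻ y in {y | 0 < p0 y},
                (if p y = 0 then (⊤ : ℝ≥0∞)
                  else ENNReal.ofReal (- Real.log (p y / p0 y))) ∂Q) : ℝ≥0∞) : EReal)))
      ≤ (((∫ y in {y | 0 < p0 y}, 2⁻¹ * Real.log ((p y + p0 y) / (2 * p0 y)) ∂Q)
          - (∫ y in {y | 0 < p0 y}, 2⁻¹ * Real.log ((p y + p0 y) / (2 * p0 y))
              ∂(ν.withDensity fun y => ENNReal.ofReal (p0 y)))
          - 2⁻¹ * ∫ y, (Real.sqrt ((p y + p0 y) / 2) - Real.sqrt (p0 y)) ^ 2 ∂ν : ℝ) :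
        EReal) := by
  have hA : MeasurableSet {y | 0 < p0 y} := measurableSet_lt measurable_const hp0meas
  have hp := integrable_of_lintegral_ofReal_eq_one hpmeas.aestronglyMeasurable
    (.of_forall hpnn) hpdens
  have hp0 := integrable_of_lintegral_ofReal_eq_one hp0meas.aestronglyMeasurable
    (.of_forall hp0nn) hp0dens
  have hp1 := integral_eq_one_of_lintegral_ofReal_eq_one hpmeas.aestronglyMeasurable
    (.of_forall hpnn) hpdens
  have hp01 := integral_eq_one_of_lintegral_ofReal_eq_one hp0meas.aestronglyMeasurable
    (.of_forall hp0nn) hp0dens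
  have hm : Integrable (fun y => (p y + p0 y) / 2) ν := (hp.add hp0).div_const 2
  have hm0 : ∀ y, 0 ≤ (p y + p0 y) / 2 := fun y => by linarith [hpnn y, hp0nn y]
  have hm1 : ∫ y, (p y + p0 y) / 2 ∂ν = 1 := by
    rw [integral_div, integral_add hp hp0, hp1, hp01]
    norm_num
  have hp0m : ∀ y, p0 y ≤ 2 * ((p y + p0 y) / 2) := fun y => by linarith [hpnn y]
  have hkl := setIntegral_mul_log_div_add_integral_sqrt_sub_sqrt_sq_nonpos hm hp0 hm0 hp0nn
    hp0meas hm1 hp01 (fun y hy => by linarith [hp0m y])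
    (integrableOn_mul_log_div hm hp0 hm0 hp0nn ((hpmeas.add hp0meas).div_const 2) hp0meas hp0m)
  have hP0 : ∫ y in {y | 0 < p0 y}, 2⁻¹ * Real.log ((p y + p0 y) / (2 * p0 y))
      ∂(ν.withDensity fun y => ENNReal.ofReal (p0 y))
      = 2⁻¹ * ∫ y in {y | 0 < p0 y}, p0 y * Real.log ((p y + p0 y) / 2 / p0 y) ∂ν := by
    rw [setIntegral_withDensity_ofReal hp0meas hp0nn _ hA, ← integral_const_mul]
    simp only [div_div, mul_left_comm]
  have hQ := coe_lintegral_ofReal_sub_lintegral_ite_top_le_integral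
    (μ := Q.restrict {y | 0 < p0 y}) (P := fun y => p y = 0) (hpmeas (measurableSet_singleton 0))
    (hQint.const_mul 2) ((ae_restrict_iff' hA).2 (.of_forall fun y hy hpy =>
      Real.log_div_le_two_mul_log_add_div ((hpnn y).lt_of_ne' hpy) hy))
  calc _ ≤ ((4⁻¹ : ℝ) : EReal) * ((∫ y in {y | 0 < p0 y},
          2 * Real.log ((p y + p0 y) / (2 * p0 y)) ∂Q : ℝ) : EReal) :=
        mul_le_mul_of_nonneg_left hQ (by norm_num)
    _ = ((∫ y in {y | 0 < p0 y}, 2⁻¹ * Real.log ((p y + p0 y) / (2 * p0 y)) ∂Q : ℝ) : EReal) := by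
        rw [← EReal.coe_mul, integral_const_mul, integral_const_mul]
        ring_nf
    _ ≤ _ := EReal.coe_le_coe_iff.2 (by linarith)

/-- **The deterministic core of the basic inequality (Lemma C.1) in the Group-Sort-Fuse
paper.**
Let `p, p₀` be probability densities with respect to a σ-finite measure `ν`, let `P₀` be
the probability measure with density `p₀`, and let `Q` be any probability measure with
`Q({p₀ = 0}) = 0`.  Then
`(1/4) ∫_{p₀>0} log(p/p₀) dQ ≤ ∫_{p₀>0} (1/2) log((p+p₀)/(2p₀)) d(Q − P₀) − h²((p+p₀)/2, p₀)`,
where the left-hand integral is interpreted in `[−∞, ∞)` (formalized in `EReal` as the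
difference of the lower integrals of the positive part and of the extended negative part,
the latter being `+∞` wherever `p = 0 < p₀`), `h` is the Hellinger distance, and the
integral against `d(Q − P₀)` is the difference of the corresponding (Bochner) integrals,
the `Q`-integrability of the integrand being assumed so that it is well defined. -/
theorem basic_inequality_core
    {Y : Type*} [MeasurableSpace Y] (ν : Measure Y) [SigmaFinite ν]
    (p p0 : Y → ℝ)
    (hpmeas : Measurable p) (hp0meas : Measurable p0)
    (hpnn : ∀ y, 0 ≤ p y) (hp0nn : ∀ y, 0 ≤ p0 y)
    (hpdens : ∫⁻ y, ENNReal.ofReal (p y) ∂ν = 1)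
    (hp0dens : ∫⁻ y, ENNReal.ofReal (p0 y) ∂ν = 1)
    (Q : Measure Y) [IsProbabilityMeasure Q]
    (hQnull : Q {y | p0 y = 0} = 0)
    (hQint : Integrable (fun y => Real.log ((p y + p0 y) / (2 * p0 y)))
      (Q.restrict {y | 0 < p0 y})) :
    (((4⁻¹ : ℝ) : EReal) *
        ((((∫⁻ y in {y | 0 < p0 y}, ENNReal.ofReal (Real.log (p y / p0 y)) ∂Q) : ℝ≥0∞) :
            EReal)
          - (((∫⁻ y in {y | 0 < p0 y},
                (if p y = 0 then (⊤ : ℝ≥0∞)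
                  else ENNReal.ofReal (- Real.log (p y / p0 y))) ∂Q) : ℝ≥0∞) : EReal)))
      ≤ (((∫ y in {y | 0 < p0 y}, 2⁻¹ * Real.log ((p y + p0 y) / (2 * p0 y)) ∂Q)
          - (∫ y in {y | 0 < p0 y}, 2⁻¹ * Real.log ((p y + p0 y) / (2 * p0 y))
              ∂(ν.withDensity fun y => ENNReal.ofReal (p0 y)))
          - 2⁻¹ * ∫ y, (Real.sqrt ((p y + p0 y) / 2) - Real.sqrt (p0 y)) ^ 2 ∂ν : ℝ) :
        EReal) :=
  basic_inequality_core_general ν p p0 hpmeas hp0meas hpnn hp0nn hpdens hp0dens Q hQint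
end
end
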